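/- arXiv:1604.01171 — 8 statements merged into one kernel-verified Lean document; each statement's English description precedes it below -/
import Mathlib

section
/- For all real numbers x with 0 < x < 1, it holds that x·log(1 − 2x/(1+x)) − log(1 − x²) ≤ −x². -/
open Set

private lemma aux_mono {f f' : ℝ → ℝ} {b : ℝ} (hb : 0 ≤ b)
    (hc : ContinuousOn f (Icc 0 b))
    (hd : ∀ y ∈ Ioo (0:ℝ) b, HasDerivAt f (f' y) y)
    (h' : ∀ y ∈ Ioo (0:ℝ) b, 0 ≤ f' y) : f 0 ≤ f b := by
  have := monotoneOn_of_deriv_nonneg (convex_Icc 0 b) hc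
    (fun y hy => by
      rw [interior_Icc] at hy
      exact (hd y hy).differentiableAt.differentiableWithinAt)
    (fun y hy => by
      rw [interior_Icc] at hy
      rw [(hd y hy).deriv]; exact h' y hy)
  exact this (left_mem_Icc.2 hb) (right_mem_Icc.2 hb) hb

private lemma logA {x : ℝ} (hx0 : 0 ≤ x) (hx1 : x < 1) :
    Real.log (1 - x) ≤ -x - x ^ 2 / 2 := by
  have h := aux_mono (f := fun y => -y - y ^ 2 / 2 - Real.log (1 - y))
    (f' := fun y => -1 - y + 1 / (1 - y)) hx0
    (by
      apply ContinuousOn.sub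
      · fun_prop
      · apply Real.continuousOn_log.comp (by fun_prop)
        intro y hy
        simp only [mem_Icc] at hy
        have : 1 - y > 0 := by linarith [hy.2]
        simp [Set.mem_compl_iff]
        linarith)
    (fun y hy => by
      simp only [mem_Ioo] at hy
      have hy1 : (1:ℝ) - y ≠ 0 := by nlinarith [hy.1, hy.2, hx1]
      have hlog : HasDerivAt (fun z : ℝ => Real.log (1 - z)) (-1 / (1 - y)) y := by
        have := (HasDerivAt.const_sub 1 (hasDerivAt_id y)).log hy1
        simpa using this
      have := ((hasDerivAt_id y).neg.sub
        (((hasDerivAt_pow 2 y)).div_const 2)).sub hlog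
      refine this.congr_deriv ?_
      push_cast
      ring)
    (fun y hy => by
      simp only [mem_Ioo] at hy
      have h1 : (0:ℝ) < 1 - y := by nlinarith [hy.2, hx1]
      show 0 ≤ -1 - y + 1 / (1 - y)
      have : -1 - y + 1 / (1 - y) = y ^ 2 / (1 - y) := by field_simp; ring
      rw [this]
      positivity)
  simp only [sub_zero, add_zero, Real.log_one] at h
  norm_num at h
  linarith

private lemma logB {x : ℝ} (hx0 : 0 ≤ x) :
    x - x ^ 2 / 2 ≤ Real.log (1 + x) := by
  have h := aux_mono (f := fun y => Real.log (1 + y) - y + y ^ 2 / 2)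
    (f' := fun y => 1 / (1 + y) - 1 + y) hx0
    (by
      apply ContinuousOn.add
      apply ContinuousOn.sub
      · apply Real.continuousOn_log.comp (by fun_prop)
        intro y hy
        simp only [mem_Icc] at hy
        simp [Set.mem_compl_iff]
        linarith [hy.1]
      · fun_prop
      · fun_prop)
    (fun y hy => by
      simp only [mem_Ioo] at hy
      have hy1 : (1:ℝ) + y ≠ 0 := by linarith [hy.1]
      have hlog : HasDerivAt (fun z : ℝ => Real.log (1 + z)) (1 / (1 + y)) y := by
        have := ((hasDerivAt_id y).const_add 1).log hy1
        simpa using this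
      have := (hlog.sub (hasDerivAt_id y)).add ((hasDerivAt_pow 2 y).div_const 2)
      refine this.congr_deriv ?_
      push_cast
      ring)
    (fun y hy => by
      simp only [mem_Ioo] at hy
      have h1 : (0:ℝ) < 1 + y := by linarith [hy.1]
      show 0 ≤ 1 / (1 + y) - 1 + y
      have : 1 / (1 + y) - 1 + y = y ^ 2 / (1 + y) := by field_simp; ring
      rw [this]
      positivity)
  simp only [sub_zero, add_zero, Real.log_one] at h
  norm_num at h
  linarith

private lemma claimC1 {x : ℝ} (hx0 : 0 ≤ x) (hx1 : x < 1) :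
    (x - 1) * Real.log (1 - x) ≤ x - x ^ 2 / 2 - x ^ 3 / 6 := by
  have h := aux_mono
    (f := fun y => y - y ^ 2 / 2 - y ^ 3 / 6 - (y - 1) * Real.log (1 - y))
    (f' := fun y => -y - y ^ 2 / 2 - Real.log (1 - y)) hx0
    (by
      apply ContinuousOn.sub
      · fun_prop
      · apply ContinuousOn.mul (by fun_prop)
        apply Real.continuousOn_log.comp (by fun_prop)
        intro y hy
        simp only [mem_Icc] at hy
        simp [Set.mem_compl_iff]
        linarith [hy.2, hx1])
    (fun y hy => by
      simp only [mem_Ioo] at hy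
      have h1 : (0:ℝ) < 1 - y := by nlinarith [hy.2, hx1]
      have hy1 : (1:ℝ) - y ≠ 0 := ne_of_gt h1
      have hlog : HasDerivAt (fun z : ℝ => Real.log (1 - z)) (-1 / (1 - y)) y := by
        have := (HasDerivAt.const_sub 1 (hasDerivAt_id y)).log hy1
        simpa using this
      have hmul : HasDerivAt (fun z : ℝ => (z - 1) * Real.log (1 - z))
          (1 * Real.log (1 - y) + (y - 1) * (-1 / (1 - y))) y :=
        (((hasDerivAt_id y).sub_const 1)).mul hlog
      have := (((hasDerivAt_id y).sub ((hasDerivAt_pow 2 y).div_const 2)).sub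
        ((hasDerivAt_pow 3 y).div_const 6)).sub hmul
      refine this.congr_deriv ?_
      push_cast
      field_simp
      ring)
    (fun y hy => by
      simp only [mem_Ioo] at hy
      have := logA (le_of_lt hy.1) (lt_trans hy.2 hx1)
      linarith)
  simp only [sub_zero, add_zero, Real.log_one] at h
  norm_num at h
  linarith

private lemma claimC2 {x : ℝ} (hx0 : 0 ≤ x) :
    x + x ^ 2 / 2 - x ^ 3 / 6 ≤ (x + 1) * Real.log (1 + x) := by
  have h := aux_mono
    (f := fun y => (y + 1) * Real.log (1 + y) - (y + y ^ 2 / 2 - y ^ 3 / 6))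
    (f' := fun y => Real.log (1 + y) - (y - y ^ 2 / 2)) hx0
    (by
      apply ContinuousOn.sub
      · apply ContinuousOn.mul (by fun_prop)
        apply Real.continuousOn_log.comp (by fun_prop)
        intro y hy
        simp only [mem_Icc] at hy
        simp [Set.mem_compl_iff]
        linarith [hy.1]
      · fun_prop)
    (fun y hy => by
      simp only [mem_Ioo] at hy
      have hy1 : (1:ℝ) + y ≠ 0 := by linarith [hy.1]
      have hlog : HasDerivAt (fun z : ℝ => Real.log (1 + z)) (1 / (1 + y)) y := by
        have := ((hasDerivAt_id y).const_add 1).log hy1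
        simpa using this
      have hmul : HasDerivAt (fun z : ℝ => (z + 1) * Real.log (1 + z))
          (1 * Real.log (1 + y) + (y + 1) * (1 / (1 + y))) y :=
        (((hasDerivAt_id y).add_const 1)).mul hlog
      have := hmul.sub (((hasDerivAt_id y).add ((hasDerivAt_pow 2 y).div_const 2)).sub
        ((hasDerivAt_pow 3 y).div_const 6))
      refine this.congr_deriv ?_
      push_cast
      field_simp
      ring)
    (fun y hy => by
      simp only [mem_Ioo] at hy
      have := logB (le_of_lt hy.1)
      linarith)
  simp only [sub_zero, add_zero, Real.log_one] at h
  norm_num at h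
  linarith

theorem stmt_0 (x : ℝ) (hx0 : 0 < x) (hx1 : x < 1) :
    x * Real.log (1 - 2 * x / (1 + x)) - Real.log (1 - x ^ 2) ≤ -x ^ 2 := by
  have h1 : (0:ℝ) < 1 - x := by linarith
  have h2 : (0:ℝ) < 1 + x := by linarith
  have e1 : 1 - 2 * x / (1 + x) = (1 - x) / (1 + x) := by
    field_simp
    ring
  have e2 : (1:ℝ) - x ^ 2 = (1 - x) * (1 + x) := by ring
  rw [e1, e2, Real.log_div (ne_of_gt h1) (ne_of_gt h2),
    Real.log_mul (ne_of_gt h1) (ne_of_gt h2)]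
  have hc1 := claimC1 (le_of_lt hx0) hx1
  have hc2 := claimC2 (le_of_lt hx0)
  nlinarith [hc1, hc2]
end

section
/- Let 0 ≤ c₋ < 1 and c₊ ≥ 0. For any t ∈ [−c₋, c₊], it holds that √((c₊ − t)(c₋ + t)) / (1 + t) ≤ (c₋ + c₊) / (2·√((1 − c₋)(1 + c₊))). -/
theorem stmt_5 (cm cp t : ℝ) (hcm0 : 0 ≤ cm) (hcm1 : cm < 1) (hcp : 0 ≤ cp)
    (ht1 : -cm ≤ t) (ht2 : t ≤ cp) :
    Real.sqrt ((cp - t) * (cm + t)) / (1 + t) ≤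
      (cm + cp) / (2 * Real.sqrt ((1 - cm) * (1 + cp))) := by
  have ht0 : 0 < 1 + t := by linarith
  have hD : (0:ℝ) < (1 - cm) * (1 + cp) := by nlinarith
  have hsD : 0 < Real.sqrt ((1 - cm) * (1 + cp)) := Real.sqrt_pos.mpr hD
  rw [div_le_div_iff₀ ht0 (by positivity)]
  set X := (cp - t) * (1 - cm) with hXdef
  set Y := (cm + t) * (1 + cp) with hYdef
  have hX : (0:ℝ) ≤ X := by nlinarith
  have hY : (0:ℝ) ≤ Y := by nlinarith
  have key : Real.sqrt ((cp - t) * (cm + t)) * Real.sqrt ((1 - cm) * (1 + cp))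
      = Real.sqrt X * Real.sqrt Y := by
    rw [← Real.sqrt_mul (by nlinarith), ← Real.sqrt_mul hX]
    rw [hXdef, hYdef]
    ring_nf
  have hx2 := Real.sq_sqrt hX
  have hy2 := Real.sq_sqrt hY
  have hxn := Real.sqrt_nonneg X
  have hyn := Real.sqrt_nonneg Y
  have amgm : 2 * (Real.sqrt X * Real.sqrt Y) ≤ X + Y := by
    nlinarith [sq_nonneg (Real.sqrt X - Real.sqrt Y)]
  have hsum : X + Y = (cm + cp) * (1 + t) := by ring
  calc Real.sqrt ((cp - t) * (cm + t)) * (2 * Real.sqrt ((1 - cm) * (1 + cp)))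
      = 2 * (Real.sqrt X * Real.sqrt Y) := by rw [← key]; ring
    _ ≤ X + Y := amgm
    _ = (cm + cp) * (1 + t) := hsum
end

section
/- Let M be an n×p real matrix, s a positive integer, and suppose that for all vectors x with at most 2s nonzero entries, (1 − c₋)‖x‖₂² ≤ ‖Mx‖₂² ≤ (1 + c₊)‖x‖₂² with 0 ≤ c₋ < 1. Let v_{S} and v_{T} be vectors supported on disjoint sets S, T each of size at most s, and suppose ‖M v_S‖₂² = (1+t)‖v_S‖₂² for some t ∈ [−c₋, c₊]. Then |⟨M v_S, M v_T⟩| ≤ √((c₊ − t)(c₋ + t)) · ‖v_S‖₂ · ‖v_T‖₂. -/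
set_option maxHeartbeats 1000000


open Matrix

theorem stmt_8 (n p s : ℕ) (hs : 0 < s) (M : Matrix (Fin n) (Fin p) ℝ)
    (cm cp : ℝ) (hcm0 : 0 ≤ cm) (hcm1 : cm < 1) (hcp : 0 ≤ cp)
    (hRIP : ∀ x : Fin p → ℝ,
      (Finset.univ.filter (fun i => x i ≠ 0)).card ≤ 2 * s →
        (1 - cm) * (x ⬝ᵥ x) ≤ (M.mulVec x) ⬝ᵥ (M.mulVec x) ∧
        (M.mulVec x) ⬝ᵥ (M.mulVec x) ≤ (1 + cp) * (x ⬝ᵥ x))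
    (S T : Finset (Fin p)) (hST : Disjoint S T) (hScard : S.card ≤ s) (hTcard : T.card ≤ s)
    (vS vT : Fin p → ℝ)
    (hvS : ∀ i, i ∉ S → vS i = 0) (hvT : ∀ i, i ∉ T → vT i = 0)
    (t : ℝ) (ht1 : -cm ≤ t) (ht2 : t ≤ cp)
    (hMS : (M.mulVec vS) ⬝ᵥ (M.mulVec vS) = (1 + t) * (vS ⬝ᵥ vS)) :
    |(M.mulVec vS) ⬝ᵥ (M.mulVec vT)| ≤
      Real.sqrt ((cp - t) * (cm + t)) * Real.sqrt (vS ⬝ᵥ vS) * Real.sqrt (vT ⬝ᵥ vT) := by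
  classical
  set a := vS ⬝ᵥ vS with ha
  set b := vT ⬝ᵥ vT with hb
  set c := (M.mulVec vS) ⬝ᵥ (M.mulVec vT) with hc
  set d := (M.mulVec vT) ⬝ᵥ (M.mulVec vT) with hd
  have ha0 : 0 ≤ a := Finset.sum_nonneg fun i _ => mul_self_nonneg _
  have hb0 : 0 ≤ b := Finset.sum_nonneg fun i _ => mul_self_nonneg _
  -- disjoint supports
  have hdot0 : vS ⬝ᵥ vT = 0 := by
    apply Finset.sum_eq_zero
    intro i _
    by_cases hiS : i ∈ S
    · rw [hvT i (fun hiT => (Finset.disjoint_left.mp hST hiS) hiT), mul_zero]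
    · rw [hvS i hiS, zero_mul]
  -- sparsity of combinations
  have hsparse : ∀ α : ℝ,
      (Finset.univ.filter (fun i => (vS + α • vT) i ≠ 0)).card ≤ 2 * s := by
    intro α
    have hsub : Finset.univ.filter (fun i => (vS + α • vT) i ≠ 0) ⊆ S ∪ T := by
      intro i hi
      simp only [Finset.mem_filter, Pi.add_apply, Pi.smul_apply, smul_eq_mul] at hi
      by_contra hmem
      simp only [Finset.mem_union, not_or] at hmem
      exact hi.2 (by rw [hvS i hmem.1, hvT i hmem.2]; ring)
    calc (Finset.univ.filter (fun i => (vS + α • vT) i ≠ 0)).card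
        ≤ (S ∪ T).card := Finset.card_le_card hsub
      _ ≤ S.card + T.card := Finset.card_union_le _ _
      _ ≤ 2 * s := by omega
  have hTsparse : (Finset.univ.filter (fun i => vT i ≠ 0)).card ≤ 2 * s := by
    have hsub : Finset.univ.filter (fun i => vT i ≠ 0) ⊆ T := by
      intro i hi
      simp only [Finset.mem_filter] at hi
      by_contra hmem
      exact hi.2 (hvT i hmem)
    calc (Finset.univ.filter (fun i => vT i ≠ 0)).card ≤ T.card := Finset.card_le_card hsub
      _ ≤ 2 * s := by omega
  -- bounds on d
  obtain ⟨hdlo, hdhi⟩ := hRIP vT hTsparse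
  -- expansion of quadratic forms
  have hexp : ∀ α : ℝ,
      (M.mulVec (vS + α • vT)) ⬝ᵥ (M.mulVec (vS + α • vT))
        = (1 + t) * a + 2 * α * c + α ^ 2 * d ∧
      (vS + α • vT) ⬝ᵥ (vS + α • vT) = a + α ^ 2 * b := by
    intro α
    constructor
    · simp only [Matrix.mulVec_add, Matrix.mulVec_smul, add_dotProduct, dotProduct_add,
        smul_dotProduct, dotProduct_smul, smul_eq_mul]
      rw [dotProduct_comm (M.mulVec vT) (M.mulVec vS), hMS]
      ring
    · simp only [add_dotProduct, dotProduct_add, smul_dotProduct, dotProduct_smul, smul_eq_mul]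
      rw [dotProduct_comm vT vS, hdot0]
      ring
  -- two quadratic inequalities, valid for all α
  have hq1 : ∀ α : ℝ, 0 ≤ ((1 + cp) * b - d) * (α * α) + (-(2 * c)) * α + (cp - t) * a := by
    intro α
    obtain ⟨h1, h2⟩ := hexp α
    have := (hRIP (vS + α • vT) (hsparse α)).2
    rw [h1, h2] at this
    nlinarith [this]
  have hq2 : ∀ α : ℝ, 0 ≤ (d - (1 - cm) * b) * (α * α) + (2 * c) * α + (cm + t) * a := by
    intro α
    obtain ⟨h1, h2⟩ := hexp α
    have := (hRIP (vS + α • vT) (hsparse α)).1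
    rw [h1, h2] at this
    nlinarith [this]
  have hd1 := discrim_le_zero hq1
  have hd2 := discrim_le_zero hq2
  rw [discrim] at hd1 hd2
  rw [show vT ⬝ᵥ vT = b from rfl, show (M.mulVec vT) ⬝ᵥ (M.mulVec vT) = d from rfl] at hdlo hdhi
  clear_value a b c d
  have key1 : c ^ 2 ≤ (cp - t) * a * ((1 + cp) * b - d) := by nlinarith [hd1]
  have key2 : c ^ 2 ≤ (cm + t) * a * (d - (1 - cm) * b) := by nlinarith [hd2]
  have hu0 : 0 ≤ (1 + cp) * b - d := by linarith
  have hw0 : 0 ≤ d - (1 - cm) * b := by linarith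
  have hcpt : 0 ≤ cp - t := by linarith
  have hcmt : 0 ≤ cm + t := by linarith
  -- main bound on c^2
  have hmain : c ^ 2 ≤ (cp - t) * (cm + t) * a * b := by
    rcases eq_or_lt_of_le (by linarith : (0:ℝ) ≤ cp + cm) with hz | hpos
    · -- cp + cm = 0, hence cp = cm = t = 0 and the bound is c = 0
      have hcp0 : cp = 0 := by linarith
      have hcm0' : cm = 0 := by linarith
      have ht0 : t = 0 := by linarith [ht1, ht2]
      have hu : (1 + cp) * b - d = 0 := by nlinarith [hu0, hw0]
      rw [hu] at key1
      have h0 : c ^ 2 ≤ 0 := by simpa using key1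
      have hr : (cp - t) * (cm + t) * a * b = 0 := by rw [hcp0, hcm0', ht0]; ring
      linarith
    · have hcomb : (cp + cm) * c ^ 2 ≤ (cp + cm) * ((cp - t) * (cm + t) * a * b) := by
        nlinarith [mul_le_mul_of_nonneg_left key1 hcmt,
          mul_le_mul_of_nonneg_left key2 hcpt]
      exact le_of_mul_le_mul_left hcomb hpos
  -- conclude
  have habs : |c| = Real.sqrt (c ^ 2) := by
    rw [Real.sqrt_sq_eq_abs]
  rw [habs]
  have hX : 0 ≤ (cp - t) * (cm + t) := mul_nonneg hcpt hcmt
  calc Real.sqrt (c ^ 2) ≤ Real.sqrt ((cp - t) * (cm + t) * a * b) :=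
        Real.sqrt_le_sqrt hmain
    _ = Real.sqrt ((cp - t) * (cm + t)) * Real.sqrt a * Real.sqrt b := by
        rw [Real.sqrt_mul (mul_nonneg hX ha0), Real.sqrt_mul hX]
end

section
/- For all integers m ≥ 1 and 1 ≤ n ≤ m, it holds that log( (n/4^m) · C(2m, m−n) ) ≤ 5 − 0.6321·n²/m, where C(·,·) denotes the binomial coefficient. -/
open Real Finset

-- log x ≥ 2(x-1)/(x+1) for x ≥ 1
lemma key_log {x : ℝ} (hx : 1 ≤ x) : 2 * (x - 1) / (x + 1) ≤ Real.log x := by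
  set f : ℝ → ℝ := fun z => Real.log z + 4 * (z + 1)⁻¹ with hf
  have hderiv : ∀ y ∈ interior (Set.Ici (1:ℝ)), HasDerivAt f (1/y - 4/(y+1)^2) y := by
    intro y hy
    rw [interior_Ici, Set.mem_Ioi] at hy
    have h1 : HasDerivAt Real.log (1/y) y := by
      simpa [one_div] using Real.hasDerivAt_log (by linarith)
    have h2 : HasDerivAt (fun z : ℝ => z + 1) 1 y := (hasDerivAt_id y).add_const 1
    have h3 : HasDerivAt (fun z : ℝ => (z + 1)⁻¹) (-1/(y+1)^2) y := by
      exact (h2.inv (by linarith)).congr_deriv (by ring)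
    have := h1.add (h3.const_mul 4)
    exact this.congr_deriv (by ring)
  have hmono : MonotoneOn f (Set.Ici (1:ℝ)) := by
    apply monotoneOn_of_deriv_nonneg (convex_Ici 1)
    · apply ContinuousOn.add
      · intro y hy
        have hy' : (1:ℝ) ≤ y := hy
        exact (Real.continuousAt_log (by linarith)).continuousWithinAt
      · apply ContinuousOn.mul continuousOn_const
        apply ContinuousOn.inv₀ (by fun_prop)
        intro y hy
        have hy' : (1:ℝ) ≤ y := hy
        intro h; linarith
    · intro y hy
      exact (hderiv y hy).differentiableAt.differentiableWithinAt
    · intro y hy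
      rw [(hderiv y hy).deriv]
      rw [interior_Ici, Set.mem_Ioi] at hy
      rw [sub_nonneg, div_le_div_iff₀ (by positivity) (by positivity)]
      nlinarith
  have h := hmono (Set.mem_Ici.2 le_rfl) (Set.mem_Ici.2 hx) hx
  simp only [hf, Real.log_one] at h
  have hx1 : (0:ℝ) < x + 1 := by linarith
  have heq : 2 * (x - 1) / (x + 1) = 2 - 4 * (x + 1)⁻¹ := by
    field_simp; ring
  rw [heq]
  norm_num at h
  linarith

-- choose identity
lemma choose_shift (m n : ℕ) (hnm : n ≤ m) :
    Nat.choose (2*m) (m-n) * ∏ k ∈ range n, (m+1+k) =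
      Nat.choose (2*m) m * ∏ k ∈ range n, (m-k) := by
  induction n with
  | zero => simp
  | succ n ih =>
    have hn : n ≤ m := Nat.le_of_succ_le hnm
    have key : Nat.choose (2*m) (m-(n+1)) * (m+n+1) = Nat.choose (2*m) (m-n) * (m-n) := by
      have h1 : m - n = (m - (n+1)) + 1 := by omega
      have h := Nat.choose_succ_right_eq (2*m) (m - (n+1))
      rw [← h1] at h
      have h2 : 2*m - (m - (n+1)) = m+n+1 := by omega
      rw [h2] at h
      omega
    rw [prod_range_succ, prod_range_succ, ← mul_assoc, ← mul_assoc]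
    calc Nat.choose (2*m) (m-(n+1)) * (∏ k ∈ range n, (m+1+k)) * (m+1+n)
        = (Nat.choose (2*m) (m-(n+1)) * (m+n+1)) * ∏ k ∈ range n, (m+1+k) := by ring
      _ = (Nat.choose (2*m) (m-n) * (m-n)) * ∏ k ∈ range n, (m+1+k) := by rw [key]
      _ = (Nat.choose (2*m) (m-n) * ∏ k ∈ range n, (m+1+k)) * (m-n) := by ring
      _ = (Nat.choose (2*m) m * ∏ k ∈ range n, (m-k)) * (m-n) := by rw [ih hn]
      _ = Nat.choose (2*m) m * (∏ k ∈ range n, (m-k)) * (m-n) := by ring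

-- central binomial squared bound
lemma central_sq (m : ℕ) : Nat.choose (2*m) m ^ 2 * (2*m+1) ≤ 16 ^ m := by
  have h : ∀ m : ℕ, Nat.centralBinom m ^ 2 * (2*m+1) ≤ 16 ^ m := by
    intro m
    induction m with
    | zero => simp [Nat.centralBinom]
    | succ m ih =>
      have hrec := Nat.succ_mul_centralBinom_succ m
      have hpos : 0 < (m+1)^2 := by positivity
      apply Nat.le_of_mul_le_mul_left _ hpos
      have e1 : (m+1)^2 * (Nat.centralBinom (m+1) ^ 2 * (2*(m+1)+1)) =
          ((m+1) * Nat.centralBinom (m+1))^2 * (2*m+3) := by ring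
      rw [e1, hrec]
      have e2 : (2 * (2*m+1) * Nat.centralBinom m)^2 * (2*m+3) =
          (4 * (2*m+1) * (2*m+3)) * (Nat.centralBinom m ^ 2 * (2*m+1)) := by ring
      rw [e2]
      calc (4 * (2*m+1) * (2*m+3)) * (Nat.centralBinom m ^ 2 * (2*m+1))
          ≤ (4 * (2*m+1) * (2*m+3)) * 16 ^ m := Nat.mul_le_mul_left _ ih
        _ ≤ ((m+1)^2 * 16) * 16 ^ m := by
            apply Nat.mul_le_mul_right
            nlinarith
        _ = (m+1)^2 * 16 ^ (m+1) := by ring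
  have := h m
  rwa [Nat.centralBinom] at this

lemma odd_sum (n : ℕ) : ∑ k ∈ range n, (2*(k:ℝ)+1) = (n:ℝ)^2 := by
  induction n with
  | zero => simp
  | succ n ih => rw [sum_range_succ, ih]; push_cast; ring

theorem stmt_10 (m n : ℕ) (hm : 1 ≤ m) (hn1 : 1 ≤ n) (hnm : n ≤ m) :
    Real.log ((n / 4 ^ m : ℝ) * (Nat.choose (2 * m) (m - n) : ℝ)) ≤
      5 - 0.6321 * n ^ 2 / m := by
  have hmR : (1:ℝ) ≤ m := by exact_mod_cast hm
  have hnR : (1:ℝ) ≤ n := by exact_mod_cast hn1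
  have hnmR : (n:ℝ) ≤ m := by exact_mod_cast hnm
  have hc'pos : 0 < Nat.choose (2*m) (m-n) := Nat.choose_pos (by omega)
  have hcpos : 0 < Nat.choose (2*m) m := Nat.choose_pos (by omega)
  set c' : ℝ := (Nat.choose (2*m) (m-n) : ℝ) with hc'def
  set c : ℝ := (Nat.choose (2*m) m : ℝ) with hcdef
  have hc'R : (0:ℝ) < c' := by rw [hc'def]; exact_mod_cast hc'pos
  have hcR : (0:ℝ) < c := by rw [hcdef]; exact_mod_cast hcpos
  set Q : ℝ := ∏ k ∈ range n, ((m:ℝ)+1+k) with hQdef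
  set R : ℝ := ∏ k ∈ range n, ((m:ℝ)-k) with hRdef
  have hQpos : (0:ℝ) < Q := by
    rw [hQdef]; apply prod_pos; intro k _; positivity
  -- real product identity
  have hprod_id : c' * Q = c * R := by
    have h := choose_shift m n hnm
    have hcast := congrArg (Nat.cast : ℕ → ℝ) h
    push_cast at hcast
    rw [hc'def, hcdef, hQdef, hRdef]
    convert hcast using 3 with k hk
    rw [Nat.cast_sub (le_trans (Nat.le_of_lt (mem_range.1 hk)) hnm)]
  set t : ℝ := 2 * (n:ℝ)^2 / (2*(m:ℝ)+1) with htdef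
  -- product bound : R ≤ exp(-t) * Q
  have hRle : R ≤ Real.exp (-t) * Q := by
    have hfac : ∀ k ∈ range n,
        ((m:ℝ)-k) ≤ Real.exp (-(2*(2*(k:ℝ)+1)/(2*(m:ℝ)+1))) * ((m:ℝ)+1+k) := by
      intro k hk
      have hk' : k < n := mem_range.1 hk
      have hkm : (k:ℝ) + 1 ≤ m := by
        have : k + 1 ≤ m := le_trans hk' hnm
        exact_mod_cast this
      have hb : (0:ℝ) < (m:ℝ) - k := by linarith
      set x : ℝ := ((m:ℝ)+1+k) / ((m:ℝ)-k) with hx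
      have hx1 : 1 ≤ x := by
        rw [hx, le_div_iff₀ hb]; linarith
      have hxpos : (0:ℝ) < x := by linarith
      have hlog := key_log hx1
      have harg : 2 * (x - 1) / (x + 1) = 2*(2*(k:ℝ)+1)/(2*(m:ℝ)+1) := by
        rw [div_eq_div_iff (by linarith : (0:ℝ) < x + 1).ne' (by positivity : (0:ℝ) < 2*(m:ℝ)+1).ne']
        rw [hx]
        field_simp
        ring
      rw [harg] at hlog
      have hexp : Real.exp (2*(2*(k:ℝ)+1)/(2*(m:ℝ)+1)) ≤ x :=
        calc Real.exp (2*(2*(k:ℝ)+1)/(2*(m:ℝ)+1)) ≤ Real.exp (Real.log x) :=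
              Real.exp_le_exp.2 hlog
          _ = x := Real.exp_log hxpos
      have hinv : x⁻¹ ≤ (Real.exp (2*(2*(k:ℝ)+1)/(2*(m:ℝ)+1)))⁻¹ :=
        inv_anti₀ (Real.exp_pos _) hexp
      have heq : ((m:ℝ)-k) = x⁻¹ * ((m:ℝ)+1+k) := by
        rw [hx]; field_simp
      rw [heq, Real.exp_neg]
      exact mul_le_mul_of_nonneg_right hinv (by linarith)
    calc R ≤ ∏ k ∈ range n,
          (Real.exp (-(2*(2*(k:ℝ)+1)/(2*(m:ℝ)+1))) * ((m:ℝ)+1+k)) := by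
          rw [hRdef]
          apply prod_le_prod
          · intro k hk
            have hk' : k < n := mem_range.1 hk
            have hkm : (k:ℝ) + 1 ≤ m := by
              have : k + 1 ≤ m := le_trans hk' hnm
              exact_mod_cast this
            linarith
          · exact hfac
      _ = (∏ k ∈ range n, Real.exp (-(2*(2*(k:ℝ)+1)/(2*(m:ℝ)+1)))) * Q :=
          prod_mul_distrib
      _ = Real.exp (-t) * Q := by
          rw [← Real.exp_sum]
          congr 1
          have hsum : ∑ k ∈ range n, (-(2*(2*(k:ℝ)+1)/(2*(m:ℝ)+1)))
              = (-(2/(2*(m:ℝ)+1))) * ∑ k ∈ range n, (2*(k:ℝ)+1) := by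
            rw [mul_sum]
            apply sum_congr rfl
            intro k _
            ring
          rw [hsum, odd_sum, htdef]
          ring
  have hc'le : c' ≤ c * Real.exp (-t) := by
    have h1 : c' * Q ≤ (c * Real.exp (-t)) * Q := by
      rw [hprod_id]
      calc c * R ≤ c * (Real.exp (-t) * Q) :=
            mul_le_mul_of_nonneg_left hRle (by positivity)
        _ = (c * Real.exp (-t)) * Q := by ring
    exact le_of_mul_le_mul_right h1 hQpos
  -- log of central binomial
  have hlogc : 2 * Real.log c ≤ 2 * m * Real.log 4 - Real.log (2*(m:ℝ)+1) := by
    have h16 : c^2 * (2*(m:ℝ)+1) ≤ 16 ^ m := by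
      have h := central_sq m
      rw [hcdef]
      exact_mod_cast h
    have hlog16 := Real.log_le_log (by positivity) h16
    rw [Real.log_mul (by positivity) (by positivity), Real.log_pow, Real.log_pow] at hlog16
    have h4 : Real.log 16 = 2 * Real.log 4 := by
      rw [show (16:ℝ) = 4^2 by norm_num, Real.log_pow]
      push_cast; ring
    rw [h4] at hlog16
    push_cast at hlog16 ⊢
    linarith
  -- log of the whole expression
  have h4pow : (0:ℝ) < 4 ^ m := by positivity
  have hApos : (0:ℝ) < ((n:ℝ) / 4 ^ m) * c' := by positivity
  have hle : ((n:ℝ) / 4 ^ m) * c' ≤ ((n:ℝ) / 4 ^ m) * (c * Real.exp (-t)) :=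
    mul_le_mul_of_nonneg_left hc'le (by positivity)
  have hlogA : Real.log (((n:ℝ) / 4 ^ m) * c') ≤
      Real.log (n:ℝ) + Real.log c - t - m * Real.log 4 := by
    have h1 := Real.log_le_log hApos hle
    have h2 : Real.log (((n:ℝ) / 4 ^ m) * (c * Real.exp (-t)))
        = Real.log (n:ℝ) + Real.log c - t - m * Real.log 4 := by
      rw [show ((n:ℝ) / 4 ^ m) * (c * Real.exp (-t))
            = (n:ℝ) * c * Real.exp (-t) / 4 ^ m from by ring,
          Real.log_div (by positivity) (by positivity),
          Real.log_mul (by positivity) (Real.exp_ne_zero _),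
          Real.log_mul (by positivity) (by positivity),
          Real.log_exp, Real.log_pow]
      push_cast
      ring
    linarith [h1, h2.le, h2.ge]
  -- final numeric inequality
  set s : ℝ := (n:ℝ)^2 / (2*(m:ℝ)+1) with hsdef
  have hspos : (0:ℝ) < s := by rw [hsdef]; positivity
  have hts : t = 2 * s := by rw [htdef, hsdef]; ring
  have hlogsid : Real.log s = 2 * Real.log (n:ℝ) - Real.log (2*(m:ℝ)+1) := by
    rw [hsdef, Real.log_div (by positivity) (by positivity), Real.log_pow]
    push_cast; ring
  have hlogs5 : Real.log s ≤ s/5 + 3 := by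
    have h1 := Real.log_le_sub_one_of_pos (show (0:ℝ) < s/5 by positivity)
    have h2 : Real.log (s/5) = Real.log s - Real.log 5 :=
      Real.log_div (ne_of_gt hspos) (by norm_num)
    have h3 : Real.log 5 ≤ 4 := by
      have := Real.log_le_sub_one_of_pos (show (0:ℝ) < 5 by norm_num)
      linarith
    linarith
  have hn2 : (n:ℝ)^2 = s * (2*(m:ℝ)+1) := by
    rw [hsdef]; field_simp
  have key2 : 0.6321 * ((n:ℝ)^2) / (m:ℝ) ≤ 1.8963 * s := by
    rw [hn2, div_le_iff₀ (by linarith : (0:ℝ) < (m:ℝ))]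
    nlinarith [mul_nonneg hspos.le (sub_nonneg.2 hmR)]
  have hfin : Real.log s / 2 - 2 * s ≤ 5 - 0.6321 * ((n:ℝ)^2) / (m:ℝ) := by
    have : Real.log s / 2 - 2 * s ≤ 5 - 1.8963 * s := by linarith [hlogs5, hspos.le]
    linarith
  have hgoal : Real.log (n:ℝ) + Real.log c - t - m * Real.log 4 ≤
      5 - 0.6321 * ((n:ℝ)^2) / (m:ℝ) := by
    rw [hts]
    linarith
  have hcastgoal : (5:ℝ) - 0.6321 * (n:ℝ)^2 / (m:ℝ) = 5 - 0.6321 * (n:ℕ)^2 / m := by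
    push_cast; ring
  calc Real.log ((n / 4 ^ m : ℝ) * (Nat.choose (2 * m) (m - n) : ℝ))
      ≤ 5 - 0.6321 * ((n:ℝ)^2) / (m:ℝ) := le_trans hlogA hgoal
    _ = 5 - 0.6321 * (n:ℕ)^2 / m := hcastgoal
end

section
/- For all integers m ≥ 1 and 1 ≤ n ≤ m, it holds that log( ((n + 1/2)/4^m) · C(2m+1, m−n) ) ≤ 2 − 0.6555·n²/m. -/
noncomputable def LL (m n : ℕ) : ℝ :=
  (n * (n+1)) / 2 * (1/((m:ℝ)+1) + 1/((m:ℝ)+1+n))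

lemma lemA (m : ℕ) : ∀ n : ℕ, n ≤ m →
    ((2*m+1).choose (m-n) : ℝ) ≤ ((2*m+1).choose m : ℝ) * Real.exp (-(LL m n)) := by
  intro n
  induction n with
  | zero =>
    intro _
    simp [LL]
  | succ n ih =>
    intro hn1
    have hn : n ≤ m := by omega
    have ih' := ih hn
    have hidN : ((2*m+1).choose (m-(n+1))) * (m+n+2) = ((2*m+1).choose (m-n)) * (m-n) := by
      have h := Nat.choose_succ_right_eq (2*m+1) (m-n-1)
      have e1 : m - n - 1 + 1 = m - n := by omega
      have e2 : 2*m+1 - (m-n-1) = m+n+2 := by omega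
      have e3 : m - (n+1) = m - n - 1 := by omega
      rw [e1, e2] at h
      rw [e3]
      omega
    have hid : ((2*m+1).choose (m-(n+1)) : ℝ) * ((m:ℝ)+n+2) =
        ((2*m+1).choose (m-n) : ℝ) * ((m:ℝ)-n) := by
      have := congrArg (Nat.cast : ℕ → ℝ) hidN
      push_cast [Nat.cast_sub hn] at this
      convert this using 2 <;> push_cast <;> ring
    have hmn0 : (0:ℝ) ≤ (m:ℝ) - n := by
      have : (n:ℝ) ≤ m := by exact_mod_cast hn
      linarith
    have hmn2 : (0:ℝ) < (m:ℝ)+n+2 := by positivity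
    have hm1 : (0:ℝ) < (m:ℝ)+1 := by positivity
    have E1 : ((m:ℝ) - n) * Real.exp (((n:ℝ)+1)/((m:ℝ)+1)) ≤ (m:ℝ)+1 := by
      have ht := Real.add_one_le_exp (-(((n:ℝ)+1)/((m:ℝ)+1)))
      have h1 : ((m:ℝ)-n)/((m:ℝ)+1) ≤ Real.exp (-(((n:ℝ)+1)/((m:ℝ)+1))) := by
        have he : -(((n:ℝ)+1)/((m:ℝ)+1)) + 1 = ((m:ℝ)-n)/((m:ℝ)+1) := by field_simp; ring
        linarith [he ▸ ht]
      have hepos : (0:ℝ) < Real.exp (((n:ℝ)+1)/((m:ℝ)+1)) := Real.exp_pos _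
      calc ((m:ℝ)-n) * Real.exp (((n:ℝ)+1)/((m:ℝ)+1))
          = (((m:ℝ)-n)/((m:ℝ)+1)) * (((m:ℝ)+1) * Real.exp (((n:ℝ)+1)/((m:ℝ)+1))) := by
            field_simp
        _ ≤ Real.exp (-(((n:ℝ)+1)/((m:ℝ)+1))) * (((m:ℝ)+1) * Real.exp (((n:ℝ)+1)/((m:ℝ)+1))) := by
            apply mul_le_mul_of_nonneg_right h1; positivity
        _ = ((m:ℝ)+1) * (Real.exp (-(((n:ℝ)+1)/((m:ℝ)+1))) * Real.exp (((n:ℝ)+1)/((m:ℝ)+1))) := by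
            ring
        _ = (m:ℝ)+1 := by rw [← Real.exp_add]; simp
    have E2 : ((m:ℝ) + 1) * Real.exp (((n:ℝ)+1)/((m:ℝ)+n+2)) ≤ (m:ℝ)+n+2 := by
      have ht := Real.add_one_le_exp (-(((n:ℝ)+1)/((m:ℝ)+n+2)))
      have h1 : ((m:ℝ)+1)/((m:ℝ)+n+2) ≤ Real.exp (-(((n:ℝ)+1)/((m:ℝ)+n+2))) := by
        have he : -(((n:ℝ)+1)/((m:ℝ)+n+2)) + 1 = ((m:ℝ)+1)/((m:ℝ)+n+2) := by field_simp; ring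
        linarith [he ▸ ht]
      calc ((m:ℝ)+1) * Real.exp (((n:ℝ)+1)/((m:ℝ)+n+2))
          = (((m:ℝ)+1)/((m:ℝ)+n+2)) * (((m:ℝ)+n+2) * Real.exp (((n:ℝ)+1)/((m:ℝ)+n+2))) := by
            field_simp
        _ ≤ Real.exp (-(((n:ℝ)+1)/((m:ℝ)+n+2))) *
              (((m:ℝ)+n+2) * Real.exp (((n:ℝ)+1)/((m:ℝ)+n+2))) := by
            apply mul_le_mul_of_nonneg_right h1; positivity
        _ = ((m:ℝ)+n+2) * (Real.exp (-(((n:ℝ)+1)/((m:ℝ)+n+2))) * Real.exp (((n:ℝ)+1)/((m:ℝ)+n+2))) := by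
            ring
        _ = (m:ℝ)+n+2 := by rw [← Real.exp_add]; simp
    have hD : LL m (n+1) - LL m n ≤ ((n:ℝ)+1)/((m:ℝ)+1) + ((n:ℝ)+1)/((m:ℝ)+n+2) := by
      have p2 : (0:ℝ) < (m:ℝ)+n+1 := by positivity
      have hq : LL m (n+1) - LL m n = ((n:ℝ)+1)/((m:ℝ)+1) +
          (((n:ℝ)+1)*((n:ℝ)+2)/(2*((m:ℝ)+n+2)) - (n:ℝ)*((n:ℝ)+1)/(2*((m:ℝ)+n+1))) := by
        unfold LL
        push_cast
        field_simp
        ring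
      rw [hq]
      have h2 : ((n:ℝ)+1)*((n:ℝ)+2)/(2*((m:ℝ)+n+2)) - (n:ℝ)*((n:ℝ)+1)/(2*((m:ℝ)+n+1))
          ≤ ((n:ℝ)+1)/((m:ℝ)+n+2) := by
        rw [div_sub_div _ _ (by positivity : (2*((m:ℝ)+n+2)) ≠ 0)
            (by positivity : (2*((m:ℝ)+n+1)) ≠ 0),
          div_le_div_iff₀ (by positivity) (by positivity)]
        have hN : (0:ℝ) ≤ (n:ℝ) := by positivity
        nlinarith [mul_nonneg (mul_nonneg hN (by linarith : (0:ℝ) ≤ (n:ℝ)+1)) hmn2.le]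
      linarith
    have hstep : ((m:ℝ)-n) * Real.exp (LL m (n+1) - LL m n) ≤ (m:ℝ)+n+2 := by
      have hmono : Real.exp (LL m (n+1) - LL m n) ≤
          Real.exp (((n:ℝ)+1)/((m:ℝ)+1)) * Real.exp (((n:ℝ)+1)/((m:ℝ)+n+2)) := by
        rw [← Real.exp_add]
        exact Real.exp_le_exp.mpr hD
      calc ((m:ℝ)-n) * Real.exp (LL m (n+1) - LL m n)
          ≤ ((m:ℝ)-n) * (Real.exp (((n:ℝ)+1)/((m:ℝ)+1)) * Real.exp (((n:ℝ)+1)/((m:ℝ)+n+2))) :=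
            mul_le_mul_of_nonneg_left hmono hmn0
        _ = (((m:ℝ)-n) * Real.exp (((n:ℝ)+1)/((m:ℝ)+1))) * Real.exp (((n:ℝ)+1)/((m:ℝ)+n+2)) := by
            ring
        _ ≤ ((m:ℝ)+1) * Real.exp (((n:ℝ)+1)/((m:ℝ)+n+2)) :=
            mul_le_mul_of_nonneg_right E1 (Real.exp_pos _).le
        _ ≤ (m:ℝ)+n+2 := E2
    have hCpos : (0:ℝ) ≤ ((2*m+1).choose m : ℝ) := by positivity
    have key : ((m:ℝ)-n) * Real.exp (-(LL m n)) ≤ ((m:ℝ)+n+2) * Real.exp (-(LL m (n+1))) := by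
      have h := mul_le_mul_of_nonneg_right hstep (Real.exp_pos (-(LL m (n+1)))).le
      calc ((m:ℝ)-n) * Real.exp (-(LL m n))
          = ((m:ℝ)-n) * Real.exp (LL m (n+1) - LL m n) * Real.exp (-(LL m (n+1))) := by
            rw [mul_assoc, ← Real.exp_add]; ring_nf
        _ ≤ ((m:ℝ)+n+2) * Real.exp (-(LL m (n+1))) := h
    have final : ((2*m+1).choose (m-(n+1)) : ℝ) * ((m:ℝ)+n+2) ≤
        (((2*m+1).choose m : ℝ) * Real.exp (-(LL m (n+1)))) * ((m:ℝ)+n+2) := by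
      rw [hid]
      calc ((2*m+1).choose (m-n) : ℝ) * ((m:ℝ)-n)
          ≤ (((2*m+1).choose m : ℝ) * Real.exp (-(LL m n))) * ((m:ℝ)-n) :=
            mul_le_mul_of_nonneg_right ih' hmn0
        _ = ((2*m+1).choose m : ℝ) * (((m:ℝ)-n) * Real.exp (-(LL m n))) := by ring
        _ ≤ ((2*m+1).choose m : ℝ) * (((m:ℝ)+n+2) * Real.exp (-(LL m (n+1)))) :=
            mul_le_mul_of_nonneg_left key hCpos
        _ = (((2*m+1).choose m : ℝ) * Real.exp (-(LL m (n+1)))) * ((m:ℝ)+n+2) := by ring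
    exact le_of_mul_le_mul_right final hmn2


lemma lemB : ∀ m : ℕ, 1 ≤ m →
    (11 * (m:ℝ) + 14) * ((2*m+1).choose m : ℝ)^2 ≤ 15 * 16 ^ m := by
  intro m hm
  induction m, hm using Nat.le_induction with
  | base => norm_num [Nat.choose]
  | succ m hm ih =>
    have hkeyN : (m+1) * (m+2) * ((2*(m+1)+1).choose (m+1)) =
        (2*m+2) * (2*m+3) * ((2*m+1).choose m) := by
      have h1 := Nat.add_one_mul_choose_eq (2*m+1) m
      have h2 := Nat.add_one_mul_choose_eq (2*m+2) (m+1)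
      have h3 := Nat.choose_symm_half (m+1)
      have e1 : 2*(m+1)+1 = 2*m+3 := by ring
      rw [e1]
      have h3' : (2*m+3).choose (m+2) = (2*m+3).choose (m+1) := by
        have : 2*(m+1)+1 = 2*m+3 := by ring
        simpa [this] using h3
      calc (m+1) * (m+2) * ((2*m+3).choose (m+1))
          = (m+1) * ((m+2) * ((2*m+3).choose (m+2))) := by rw [h3']; ring
        _ = (m+1) * ((2*m+3) * ((2*m+2).choose (m+1))) := by
            rw [show (2*m+3) * ((2*m+2).choose (m+1)) = (2*m+3).choose (m+2) * (m+2) from h2]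
            ring
        _ = (2*m+3) * ((m+1) * ((2*m+2).choose (m+1))) := by ring
        _ = (2*m+3) * ((2*m+2) * ((2*m+1).choose m)) := by
            rw [show (2*m+2) * ((2*m+1).choose m) = (2*m+2).choose (m+1) * (m+1) from h1]
            ring
        _ = (2*m+2) * (2*m+3) * ((2*m+1).choose m) := by ring
    have hkey : ((m:ℝ)+1) * ((m:ℝ)+2) * ((2*(m+1)+1).choose (m+1) : ℝ) =
        (2*(m:ℝ)+2) * (2*(m:ℝ)+3) * ((2*m+1).choose m : ℝ) := by
      exact_mod_cast congrArg (Nat.cast : ℕ → ℝ) hkeyN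
    set c : ℝ := ((2*m+1).choose m : ℝ) with hc
    set c' : ℝ := ((2*(m+1)+1).choose (m+1) : ℝ) with hc'
    have hm1 : (1:ℝ) ≤ (m:ℝ) := by exact_mod_cast hm
    have hc0 : 0 ≤ c := by positivity
    have hc'0 : 0 ≤ c' := by positivity
    have h16 : (0:ℝ) < 16 ^ m := by positivity
    have hsq : ((m:ℝ)+2)^2 * c'^2 = 4 * (2*(m:ℝ)+3)^2 * c^2 := by
      have h2' : ((m:ℝ)+2) * c' = 2 * (2*(m:ℝ)+3) * c := by
        have hmpos : ((m:ℝ)+1) ≠ 0 := by positivity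
        apply mul_left_cancel₀ hmpos
        calc ((m:ℝ)+1) * (((m:ℝ)+2) * c') = ((m:ℝ)+1) * ((m:ℝ)+2) * c' := by ring
          _ = (2*(m:ℝ)+2) * (2*(m:ℝ)+3) * c := hkey
          _ = ((m:ℝ)+1) * (2 * (2*(m:ℝ)+3) * c) := by ring
      nlinarith [h2']
    have hpoly : 4 * (11*(m:ℝ)+25) * (2*(m:ℝ)+3)^2 ≤ 16 * (11*(m:ℝ)+14) * ((m:ℝ)+2)^2 := by
      nlinarith [hm1]
    -- goal : (11*(m+1)+14) * c'^2 ≤ 15*16^(m+1)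
    have hcancel : (11*(m:ℝ)+14) * ((m:ℝ)+2)^2 * ((11*((m:ℝ)+1)+14) * c'^2)
        ≤ (11*(m:ℝ)+14) * ((m:ℝ)+2)^2 * (15 * 16 ^ (m+1)) := by
      have step1 : (11*(m:ℝ)+14) * ((m:ℝ)+2)^2 * ((11*((m:ℝ)+1)+14) * c'^2)
          = (11*((m:ℝ)+1)+14) * (4 * (2*(m:ℝ)+3)^2) * ((11*(m:ℝ)+14) * c^2) := by
        nlinarith [hsq]
      rw [step1]
      calc (11*((m:ℝ)+1)+14) * (4 * (2*(m:ℝ)+3)^2) * ((11*(m:ℝ)+14) * c^2)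
          ≤ (11*((m:ℝ)+1)+14) * (4 * (2*(m:ℝ)+3)^2) * (15 * 16 ^ m) := by
            apply mul_le_mul_of_nonneg_left ih
            positivity
        _ ≤ (11*(m:ℝ)+14) * ((m:ℝ)+2)^2 * (15 * 16 ^ (m+1)) := by
            have : (16:ℝ)^(m+1) = 16 * 16^m := by ring
            rw [this]
            nlinarith [hpoly, h16.le, hm1]
    have hpos : (0:ℝ) < (11*(m:ℝ)+14) * ((m:ℝ)+2)^2 := by positivity
    have := le_of_mul_le_mul_left hcancel hpos
    convert this using 2
    · rfl
    · push_cast; ring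

theorem stmt_11 (m n : ℕ) (hm : 1 ≤ m) (hn1 : 1 ≤ n) (hnm : n ≤ m) :
    Real.log (((n + 1 / 2) / 4 ^ m : ℝ) * (Nat.choose (2 * m + 1) (m - n) : ℝ)) ≤
      2 - 0.6555 * n ^ 2 / m := by
  have lemB := lemB m hm
  have lemA := lemA m n hnm
  have hm0 : (0:ℝ) < m := by exact_mod_cast hm
  have hn0 : (1:ℝ) ≤ n := by exact_mod_cast hn1
  have hnm' : (n:ℝ) ≤ m := by exact_mod_cast hnm
  have hCpos : (0:ℝ) < ((2*m+1).choose (m-n) : ℝ) := by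
    exact_mod_cast Nat.choose_pos (by omega : m - n ≤ 2*m+1)
  have hX : (0:ℝ) < ((n + 1 / 2) / 4 ^ m : ℝ) * (Nat.choose (2 * m + 1) (m - n) : ℝ) := by
    apply mul_pos _ hCpos
    positivity
  rw [Real.log_le_iff_le_exp hX]
  set R : ℝ := 2 - 0.6555 * (n:ℝ) ^ 2 / (m:ℝ) with hR
  set L : ℝ := LL m n with hLdef
  set A : ℝ := ((n:ℝ) + 1/2) / 4^m with hA
  have hA0 : (0:ℝ) ≤ A := by positivity
  -- lower bound on L
  have hL : (3/4) * (n:ℝ)^2 / m ≤ L := by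
    rw [hLdef]
    unfold LL
    rw [div_le_iff₀ hm0] at *
    have p1 : (0:ℝ) < (m:ℝ)+1 := by positivity
    have p2 : (0:ℝ) < (m:ℝ)+1+n := by positivity
    have key : (3/4) * (n:ℝ)^2 * ((m:ℝ)+1) * ((m:ℝ)+1+n) ≤
        (n:ℝ)*((n:ℝ)+1)/2 * (((m:ℝ)+1+n) + ((m:ℝ)+1)) * m := by
      nlinarith [mul_nonneg (mul_nonneg hm0.le (by positivity : (0:ℝ) ≤ (n:ℝ)^2))
          (sub_nonneg.2 hnm'), mul_nonneg hm0.le (sub_nonneg.2 hnm'),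
        mul_nonneg (mul_nonneg hm0.le hm0.le) (by positivity : (0:ℝ) ≤ (n:ℝ)),
        mul_nonneg hm0.le (by positivity : (0:ℝ) ≤ (n:ℝ))]
    have expand : (n:ℝ)*((n:ℝ)+1)/2 * (1/((m:ℝ)+1) + 1/((m:ℝ)+1+n)) * m =
        ((n:ℝ)*((n:ℝ)+1)/2 * (((m:ℝ)+1+n) + ((m:ℝ)+1)) * m) / (((m:ℝ)+1) * ((m:ℝ)+1+n)) := by
      field_simp
    rw [expand, le_div_iff₀ (by positivity)]
    calc (3/4) * (n:ℝ)^2 * (((m:ℝ)+1) * ((m:ℝ)+1+n))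
        = (3/4) * (n:ℝ)^2 * ((m:ℝ)+1) * ((m:ℝ)+1+n) := by ring
      _ ≤ _ := key
  have hu : 0.189 * (n:ℝ)^2 / m ≤ 2*L - 2*(0.6555 * (n:ℝ)^2 / m) := by
    have : 2*((3/4) * (n:ℝ)^2 / m) - 2*(0.6555 * (n:ℝ)^2 / m) = 0.189 * (n:ℝ)^2 / m := by
      ring
    linarith [hL]
  have hu0 : (0:ℝ) ≤ 0.189 * (n:ℝ)^2 / m := by positivity
  -- exp 4 ≥ 54
  have hexp4 : (54:ℝ) ≤ Real.exp 4 := by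
    have h1 : Real.exp 4 = Real.exp 1 ^ (4:ℕ) := by
      rw [← Real.exp_nat_mul]; norm_num
    rw [h1]
    have h2 : (2.7182818283:ℝ)^(4:ℕ) ≤ Real.exp 1 ^ (4:ℕ) :=
      pow_le_pow_left₀ (by norm_num) (le_of_lt Real.exp_one_gt_d9) 4
    calc (54:ℝ) ≤ 2.7182818283^(4:ℕ) := by norm_num
      _ ≤ _ := h2
  have hexp : 54 * (1 + 0.189 * (n:ℝ)^2 / m) ≤ Real.exp (2*R + 2*L) := by
    have harg : 2*R + 2*L = 4 + (2*L - 2*(0.6555 * (n:ℝ)^2 / m)) := by rw [hR]; ring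
    rw [harg, Real.exp_add]
    have h2 : 1 + 0.189 * (n:ℝ)^2 / m ≤ Real.exp (2*L - 2*(0.6555 * (n:ℝ)^2 / m)) := by
      have := Real.add_one_le_exp (2*L - 2*(0.6555 * (n:ℝ)^2 / m))
      linarith
    have h3 : (0:ℝ) ≤ 1 + 0.189 * (n:ℝ)^2 / m := by positivity
    calc 54 * (1 + 0.189 * (n:ℝ)^2 / m)
        ≤ 54 * Real.exp (2*L - 2*(0.6555 * (n:ℝ)^2 / m)) := by
          apply mul_le_mul_of_nonneg_left h2; norm_num
      _ ≤ Real.exp 4 * Real.exp (2*L - 2*(0.6555 * (n:ℝ)^2 / m)) := by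
          apply mul_le_mul_of_nonneg_right hexp4 (Real.exp_pos _).le
  have hkey : 15 * ((n:ℝ) + 1/2)^2 ≤ (11*(m:ℝ)+14) * Real.exp (2*R + 2*L) := by
    have hpoly : 15 * ((n:ℝ) + 1/2)^2 ≤ (11*(m:ℝ)+14) * (54 * (1 + 0.189 * (n:ℝ)^2 / m)) := by
      have haux : 15*((n:ℝ)+1/2)^2*(m:ℝ) ≤ (11*(m:ℝ)+14)*(54*((m:ℝ) + 0.189*(n:ℝ)^2)) := by
        nlinarith [mul_nonneg (mul_nonneg (sub_nonneg.2 hn0) (by linarith : (0:ℝ) ≤ (n:ℝ))) hm0.le,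
          mul_nonneg (by linarith : (0:ℝ) ≤ (n:ℝ)) hm0.le, sq_nonneg ((n:ℝ)), sq_nonneg ((m:ℝ))]
      have heq : (11*(m:ℝ)+14) * (54 * (1 + 0.189*(n:ℝ)^2/m))
          = ((11*(m:ℝ)+14)*(54*((m:ℝ) + 0.189*(n:ℝ)^2)))/m := by
        field_simp
      rw [heq, le_div_iff₀ hm0]
      exact haux
    calc 15 * ((n:ℝ) + 1/2)^2 ≤ (11*(m:ℝ)+14) * (54 * (1 + 0.189 * (n:ℝ)^2 / m)) := hpoly
      _ ≤ (11*(m:ℝ)+14) * Real.exp (2*R + 2*L) := by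
          apply mul_le_mul_of_nonneg_left hexp; positivity
  -- main squared inequality
  have hBnd : A * (((2*m+1).choose m : ℝ) * Real.exp (-L)) ≤ Real.exp R := by
    have hLHS0 : (0:ℝ) ≤ A * (((2*m+1).choose m : ℝ) * Real.exp (-L)) := by positivity
    apply (pow_le_pow_iff_left₀ hLHS0 (Real.exp_pos R).le two_ne_zero).mp
    have h16 : (0:ℝ) < 16^m := by positivity
    have h11 : (0:ℝ) < 11*(m:ℝ)+14 := by positivity
    have h4 : ((4:ℝ)^m)^2 = 16^m := by
      rw [← pow_mul, mul_comm, pow_mul]; norm_num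
    have hsqA : A^2 * 16^m = ((n:ℝ)+1/2)^2 := by
      rw [hA, div_pow, h4, div_mul_cancel₀]
      exact h16.ne'
    have hmul : (A * (((2*m+1).choose m : ℝ) * Real.exp (-L)))^2 * (16^m * (11*(m:ℝ)+14))
        ≤ Real.exp R ^ 2 * (16^m * (11*(m:ℝ)+14)) := by
      have e1 : (A * (((2*m+1).choose m : ℝ) * Real.exp (-L)))^2 * (16^m * (11*(m:ℝ)+14))
          = (A^2 * 16^m) * Real.exp (-L)^2 * ((11*(m:ℝ)+14) * ((2*m+1).choose m : ℝ)^2) := by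
        ring
      rw [e1, hsqA]
      calc ((n:ℝ)+1/2)^2 * Real.exp (-L)^2 * ((11*(m:ℝ)+14) * ((2*m+1).choose m : ℝ)^2)
          ≤ ((n:ℝ)+1/2)^2 * Real.exp (-L)^2 * (15 * 16^m) := by
            apply mul_le_mul_of_nonneg_left lemB; positivity
        _ = (15 * ((n:ℝ)+1/2)^2) * Real.exp (-L)^2 * 16^m := by ring
        _ ≤ ((11*(m:ℝ)+14) * Real.exp (2*R + 2*L)) * Real.exp (-L)^2 * 16^m := by
            apply mul_le_mul_of_nonneg_right _ h16.le
            apply mul_le_mul_of_nonneg_right hkey (by positivity)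
        _ = Real.exp R ^ 2 * (16^m * (11*(m:ℝ)+14)) := by
            have e2 : Real.exp (2*R + 2*L) * Real.exp (-L)^2 = Real.exp R ^ 2 := by
              rw [sq, sq, ← Real.exp_add, ← Real.exp_add, ← Real.exp_add]
              ring_nf
            calc ((11*(m:ℝ)+14) * Real.exp (2*R + 2*L)) * Real.exp (-L)^2 * 16^m
                = (Real.exp (2*R + 2*L) * Real.exp (-L)^2) * ((11*(m:ℝ)+14) * 16^m) := by ring
              _ = Real.exp R ^ 2 * (16^m * (11*(m:ℝ)+14)) := by rw [e2]; ring
    exact le_of_mul_le_mul_right hmul (by positivity)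
  -- combine
  calc ((n + 1 / 2) / 4 ^ m : ℝ) * (Nat.choose (2 * m + 1) (m - n) : ℝ)
      = A * ((2*m+1).choose (m-n) : ℝ) := by rw [hA]
    _ ≤ A * (((2*m+1).choose m : ℝ) * Real.exp (-L)) := by
        apply mul_le_mul_of_nonneg_left lemA hA0
    _ ≤ Real.exp R := hBnd
end

section
/- Let 0 ≤ c₋ < 1 and c₊ ≥ 0 with (c₋ + c₊)/√((1 − c₋)(1 + c₊)) < 8/5. Then b := max over t ∈ [−c₋, c₊] of √((c₊ − t)(c₋ + t))/(1 + t) satisfies b < 4/5, and hence κ := 4b/(4 − b) < 1. -/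
theorem stmt_13 (cm cp : ℝ) (hcm0 : 0 ≤ cm) (hcm1 : cm < 1) (hcp : 0 ≤ cp)
    (hcond : (cm + cp) / Real.sqrt ((1 - cm) * (1 + cp)) < 8 / 5)
    (b : ℝ)
    (hb : IsGreatest
      {y : ℝ | ∃ t ∈ Set.Icc (-cm) cp, y = Real.sqrt ((cp - t) * (cm + t)) / (1 + t)} b) :
    b < 4 / 5 ∧ 4 * b / (4 - b) < 1 := by
  have hmp : (0:ℝ) < (1 - cm) * (1 + cp) := by nlinarith
  set D := Real.sqrt ((1 - cm) * (1 + cp)) with hD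
  have hDpos : 0 < D := Real.sqrt_pos.mpr hmp
  have hDsq : D ^ 2 = (1 - cm) * (1 + cp) := Real.sq_sqrt hmp.le
  -- b is in the set
  obtain ⟨⟨t, ht, hbeq⟩, -⟩ := hb
  obtain ⟨ht1, ht2⟩ := ht
  have h1t : 0 < 1 + t := by linarith
  have hAB : 0 ≤ (cp - t) * (cm + t) := mul_nonneg (by linarith) (by linarith)
  set s := Real.sqrt ((cp - t) * (cm + t)) with hs
  have hspos : 0 ≤ s := Real.sqrt_nonneg _
  have hssq : s ^ 2 = (cp - t) * (cm + t) := Real.sq_sqrt hAB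
  -- pointwise bound : s / (1+t) ≤ (cm+cp)/(2*D)
  have hbound : b ≤ (cm + cp) / (2 * D) := by
    rw [hbeq, div_le_div_iff₀ h1t (by positivity)]
    -- s * (2*D) ≤ (cm+cp)*(1+t)
    have hRnn : 0 ≤ (cm + cp) * (1 + t) := by positivity
    have hsqle : (s * (2 * D)) ^ 2 ≤ ((cm + cp) * (1 + t)) ^ 2 := by
      have key : 0 ≤ ((2 + cp - cm) * (1 + t) - 2 * (1 - cm) * (1 + cp)) ^ 2 := sq_nonneg _
      nlinarith [hssq, hDsq]
    nlinarith [mul_nonneg hspos hDpos.le, hsqle, hRnn]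
  have hM : (cm + cp) / (2 * D) < 4 / 5 := by
    have : (cm + cp) / (2 * D) = ((cm + cp) / D) / 2 := by
      rw [div_div, mul_comm]
    rw [this]
    linarith
  have hb45 : b < 4 / 5 := lt_of_le_of_lt hbound hM
  refine ⟨hb45, ?_⟩
  have hbnn : 0 ≤ b := by
    rw [hbeq]; positivity
  rw [div_lt_one (by linarith)]
  linarith
end

section
/- Set ρ₀ = (33 − 5√41)/16 and τ₀ = 4/√41, and let γ₀ = (4 + √41)²/25. For any 0 < ρ < ρ₀ and any real t with 0 < t < t* := (8/√41)·ρ − 2√2·√ρ + 4/√41, one has ((1 + √(2ρ))² + t) / ((1 − √(2ρ))² − t) < γ₀, and in particular the denominator (1 − √(2ρ))² − t is positive. -/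
theorem stmt_14 (ρ t : ℝ) (hρ0 : 0 < ρ) (hρ : ρ < (33 - 5 * Real.sqrt 41) / 16)
    (ht0 : 0 < t)
    (ht : t < (8 / Real.sqrt 41) * ρ - 2 * Real.sqrt 2 * Real.sqrt ρ + 4 / Real.sqrt 41) :
    0 < (1 - Real.sqrt (2 * ρ)) ^ 2 - t ∧
    ((1 + Real.sqrt (2 * ρ)) ^ 2 + t) / ((1 - Real.sqrt (2 * ρ)) ^ 2 - t) <
      (4 + Real.sqrt 41) ^ 2 / 25 := by
  set s := Real.sqrt (2 * ρ) with hs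
  set r := Real.sqrt 41 with hr
  have hrsq : r ^ 2 = 41 := Real.sq_sqrt (by norm_num)
  have hrpos : 0 < r := Real.sqrt_pos.mpr (by norm_num)
  have hr4 : 4 < r := by nlinarith
  have hs0 : 0 ≤ s := Real.sqrt_nonneg _
  have hssq : s ^ 2 = 2 * ρ := Real.sq_sqrt (by linarith)
  have hmul : Real.sqrt 2 * Real.sqrt ρ = s := by
    rw [hs, ← Real.sqrt_mul (by norm_num)]
  -- multiply ht by r
  have ht' : t * r < 4 * s ^ 2 + 4 - 2 * s * r := by
    have key : 2 * Real.sqrt 2 * Real.sqrt ρ = 2 * s := by rw [mul_assoc, hmul]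
    rw [key] at ht
    have h := mul_lt_mul_of_pos_right ht hrpos
    have h2 : (8 / r * ρ - 2 * s + 4 / r) * r = 4 * s ^ 2 + 4 - 2 * s * r := by
      field_simp
      nlinarith
    linarith [h2 ▸ h]
  have hden : 0 < (1 - s) ^ 2 - t := by nlinarith
  refine ⟨hden, ?_⟩
  rw [div_lt_div_iff₀ hden (by norm_num)]
  nlinarith [mul_lt_mul_of_pos_left ht' (show (0:ℝ) < 82 + 8 * r by linarith), hrsq, hs0, hrpos]
end

section
/- Let ρ₀ = (33 − 5√41)/16 and let 0 < ρ < ρ₀ and δ ∈ (0,1) satisfy δ > (1/(2ρ))·exp(1 − (1/(2ρ))·(√(2ρ₀) − √(2ρ))²/2). Then (1/δ)·H(2ρδ) < (√(2ρ₀) − √(2ρ))²/2, where H(t) = −t log t − (1−t) log(1−t). -/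
theorem stmt_18 (ρ δ : ℝ) (hρ0 : 0 < ρ) (hρ : ρ < (33 - 5 * Real.sqrt 41) / 16)
    (hδ0 : 0 < δ) (hδ1 : δ < 1)
    (hcond : δ > (1 / (2 * ρ)) * Real.exp (1 - (1 / (2 * ρ)) *
      ((Real.sqrt (2 * ((33 - 5 * Real.sqrt 41) / 16)) - Real.sqrt (2 * ρ)) ^ 2 / 2))) :
    (1 / δ) * (-(2 * ρ * δ) * Real.log (2 * ρ * δ) -
        (1 - 2 * ρ * δ) * Real.log (1 - 2 * ρ * δ)) <
      (Real.sqrt (2 * ((33 - 5 * Real.sqrt 41) / 16)) - Real.sqrt (2 * ρ)) ^ 2 / 2 := by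
  set c : ℝ := (Real.sqrt (2 * ((33 - 5 * Real.sqrt 41) / 16)) - Real.sqrt (2 * ρ)) ^ 2 / 2 with hc
  set t : ℝ := 2 * ρ * δ with ht
  have hs41 : Real.sqrt 41 < 7 := by
    rw [show (7:ℝ) = Real.sqrt 49 from (Real.sqrt_eq_iff_mul_self_eq (by norm_num) (by norm_num)).2 (by norm_num) |>.symm]
    exact Real.sqrt_lt_sqrt (by norm_num) (by norm_num)
  have hρhalf : ρ < 1 / 2 := by
    have h5 : (5:ℝ) < Real.sqrt 41 := by
      have := Real.lt_sqrt (x := 5) (y := 41) (by norm_num)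
      rw [this]; norm_num
    nlinarith
  have ht0 : 0 < t := by positivity
  have ht1 : t < 1 := by nlinarith
  -- key bound: -(1-t)*log(1-t) ≤ t
  have hkey : -(1 - t) * Real.log (1 - t) ≤ t := by
    have h1t : 0 < 1 - t := by linarith
    have := Real.log_le_sub_one_of_pos (show (0:ℝ) < (1 - t)⁻¹ by positivity)
    rw [Real.log_inv] at this
    have h2 : -Real.log (1 - t) ≤ (1 - t)⁻¹ - 1 := this
    have h3 : (1 - t) * ((1 - t)⁻¹ - 1) = t := by field_simp; ring
    nlinarith [mul_le_mul_of_nonneg_left h2 h1t.le]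
  -- from hypothesis: log t > 1 - c/(2ρ)
  have hexp : Real.exp (1 - (1 / (2 * ρ)) * c) < t := by
    have h2ρ : (0:ℝ) < 2 * ρ := by linarith
    have := (mul_lt_mul_iff_right₀ h2ρ).2 hcond
    calc Real.exp (1 - (1 / (2 * ρ)) * c)
        = 2 * ρ * ((1 / (2 * ρ)) * Real.exp (1 - (1 / (2 * ρ)) * c)) := by
          field_simp
      _ < 2 * ρ * δ := this
  have hlog : 1 - (1 / (2 * ρ)) * c < Real.log t :=
    (Real.lt_log_iff_exp_lt ht0).2 hexp
  have h2ρc : 2 * ρ * (1 - Real.log t) < c := by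
    have h2ρ : (0:ℝ) < 2 * ρ := by linarith
    have := (mul_lt_mul_iff_right₀ h2ρ).2 hlog
    have hcc : 2 * ρ * ((1 / (2 * ρ)) * c) = c := by field_simp
    nlinarith
  have hbound : (1 / δ) * (-t * Real.log t - (1 - t) * Real.log (1 - t))
      ≤ 2 * ρ * (1 - Real.log t) := by
    have h1 : -t * Real.log t - (1 - t) * Real.log (1 - t) ≤ -t * Real.log t + t := by
      nlinarith
    have h2 : (1 / δ) * (-t * Real.log t + t) = 2 * ρ * (1 - Real.log t) := by
      rw [ht]; field_simp; ring
    calc (1 / δ) * (-t * Real.log t - (1 - t) * Real.log (1 - t))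
        ≤ (1 / δ) * (-t * Real.log t + t) := by
          apply mul_le_mul_of_nonneg_left h1 (by positivity)
      _ = 2 * ρ * (1 - Real.log t) := h2
  linarith
end
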